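/- For every smooth permutation σ ∈ S_n other than the identity, there exists a smooth permutation σ' ∈ S_n with ℓ(σ') = ℓ(σ) - 1 such that σ^{-1}σ' or σ'σ^{-1} is a simple reflection (an adjacent transposition). -/

import Mathlib

/-!
Write `T σ` for the set of transpositions below `σ` in the Bruhat order, so that `σ` is smooth
iff `ℓ σ = #T σ`. A transposition `(i j)`, `i < j`, lies below `σ` iff some `x ≤ i` has
`j ≤ σ x` and some `z ≥ j` has `σ z ≤ i`.

For `σ ≠ 1` let `v` be the last point moved by `σ`. Replacing `σ` by `σ⁻¹` if necessary we may
assume `σ v ≤ a := σ⁻¹ v`; then `a < v`, `a` is a descent of `σ`, and with `s = (a a+1)` the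
transposition `(a v)` lies below `σ` but not below `σ s ≤ σ`, so `T (σ s) ⊊ T σ`. Induction on
the length gives `ℓ σ ≤ #T σ` for every `σ`, and for smooth `σ` the chain
`ℓ (σ s) ≤ #T (σ s) < #T σ = ℓ σ = ℓ (σ s) + 1` makes `σ s` smooth.
-/

namespace SmoothPerm

variable {n : ℕ}

/-- Bruhat order on `S_n`, via the standard counting criterion. -/
def bruhatLE (τ σ : Equiv.Perm (Fin n)) : Prop :=
  ∀ i j : Fin n,
    (Finset.univ.filter (fun x => x ≤ i ∧ σ x ≤ j)).card ≤
      (Finset.univ.filter (fun x => x ≤ i ∧ τ x ≤ j)).card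

/-- Number of inversions (the length ℓ(σ)). -/
def invNum (σ : Equiv.Perm (Fin n)) : ℕ :=
  (Finset.univ.filter (fun p : Fin n × Fin n => p.1 < p.2 ∧ σ p.2 < σ p.1)).card

def isTransposition (τ : Equiv.Perm (Fin n)) : Prop :=
  ∃ i j : Fin n, i < j ∧ τ = Equiv.swap i j

/-- σ is smooth iff ℓ(σ) equals the number of transpositions Bruhat-below σ. -/
def smooth (σ : Equiv.Perm (Fin n)) : Prop :=
  invNum σ = Nat.card {τ : Equiv.Perm (Fin n) // isTransposition τ ∧ bruhatLE τ σ}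

def avoids4231 (σ : Equiv.Perm (Fin n)) : Prop :=
  ¬ ∃ a b c d : Fin n, a < b ∧ b < c ∧ c < d ∧ σ d < σ b ∧ σ b < σ c ∧ σ c < σ a

/-- covexillary = 3412-avoiding. -/
def covexillary (σ : Equiv.Perm (Fin n)) : Prop :=
  ¬ ∃ a b c d : Fin n, a < b ∧ b < c ∧ c < d ∧ σ c < σ d ∧ σ d < σ a ∧ σ a < σ b

def avoids321 (σ : Equiv.Perm (Fin n)) : Prop :=
  ¬ ∃ a b c : Fin n, a < b ∧ b < c ∧ σ c < σ b ∧ σ b < σ a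

/-- The 3-cycle i ↦ j ↦ k ↦ i. -/
def Rc (i j k : Fin n) : Equiv.Perm (Fin n) := Equiv.swap i k * Equiv.swap i j

def Lc (i j k : Fin n) : Equiv.Perm (Fin n) := (Rc i j k)⁻¹

def inC23 (τ : Equiv.Perm (Fin n)) : Prop :=
  isTransposition τ ∨ ∃ i j k : Fin n, i < j ∧ j < k ∧ (τ = Rc i j k ∨ τ = Lc i j k)

/-- The 2-3-table of σ. -/
def Ctab (σ : Equiv.Perm (Fin n)) : Set (Equiv.Perm (Fin n)) :=
  {τ | inC23 τ ∧ bruhatLE τ σ}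

def admissible (A : Set (Equiv.Perm (Fin n))) : Prop :=
  (∀ τ ∈ A, inC23 τ) ∧
  (∀ σ ∈ A, ∀ τ : Equiv.Perm (Fin n), inC23 τ → bruhatLE τ σ → τ ∈ A) ∧
  (∀ i j k l : Fin n, i < j → j < l → i < k → k < l →
    Rc i j l ∈ A → Lc i k l ∈ A → Equiv.swap i l ∈ A) ∧
  (∀ i j k : Fin n, i < j → j < k →
    Equiv.swap i j ∈ A → Equiv.swap j k ∈ A → (Rc i j k ∈ A ∨ Lc i j k ∈ A))

def isWedge (A : Set (Equiv.Perm (Fin n))) (i j : Fin n) : Prop :=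
  i < j ∧ Equiv.swap i j ∈ A ∧
  (∀ i' : Fin n, (i' : ℕ) + 1 = (i : ℕ) → Equiv.swap i' i ∉ A) ∧
  (∀ j' : Fin n, (j : ℕ) + 1 = (j' : ℕ) → Rc i j j' ∉ A)

def derivedSet (A : Set (Equiv.Perm (Fin n))) (i j : Fin n) : Set (Equiv.Perm (Fin n)) :=
  A \ ({Equiv.swap i j} ∪ {τ | ∃ k, j < k ∧ τ = Lc i j k} ∪
       {τ | ∃ k, i < k ∧ k < j ∧ τ = Rc i k j})

def strictTotalOn (S : Set (Equiv.Perm (Fin n)))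
    (r : Equiv.Perm (Fin n) → Equiv.Perm (Fin n) → Prop) : Prop :=
  (∀ x ∈ S, ¬ r x x) ∧
  (∀ x ∈ S, ∀ y ∈ S, ∀ z ∈ S, r x y → r y z → r x z) ∧
  (∀ x ∈ S, ∀ y ∈ S, x ≠ y → r x y ∨ r y x)

def compatibleOrder (A : Set (Equiv.Perm (Fin n)))
    (r : Equiv.Perm (Fin n) → Equiv.Perm (Fin n) → Prop) : Prop :=
  (∀ i j k : Fin n, i < j → j < k → Rc i j k ∈ A → Lc i j k ∉ A →
    r (Equiv.swap i j) (Equiv.swap j k)) ∧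
  (∀ i j k : Fin n, i < j → j < k → Lc i j k ∈ A → Rc i j k ∉ A →
    r (Equiv.swap j k) (Equiv.swap i j)) ∧
  (∀ i j k : Fin n, i < j → j < k → Equiv.swap i k ∈ A →
    ((r (Equiv.swap i j) (Equiv.swap i k) ∧ r (Equiv.swap i k) (Equiv.swap j k)) ∨
     (r (Equiv.swap j k) (Equiv.swap i k) ∧ r (Equiv.swap i k) (Equiv.swap i j))))

def coversIn (S : Set (Equiv.Perm (Fin n)))
    (r : Equiv.Perm (Fin n) → Equiv.Perm (Fin n) → Prop)
    (x y : Equiv.Perm (Fin n)) : Prop :=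
  x ∈ S ∧ y ∈ S ∧ r x y ∧ ∀ z ∈ S, ¬ (r x z ∧ r z y)

/-- m_σ(i) = max σ([i]). -/
def maxS (σ : Equiv.Perm (Fin n)) (i : Fin n) : Fin n :=
  ((Finset.univ.filter (fun x => x ≤ i)).image (fun x => σ x)).max'
    ⟨σ i, Finset.mem_image_of_mem _ (by simp)⟩

/-- The cyclic shift i → i+1 → ⋯ → j → i. -/
def Rseg (i j : Fin n) : Equiv.Perm (Fin n) :=
  ((List.finRange n).filter (fun x => decide (i ≤ x ∧ x ≤ j))).formPerm

def definedByInclusions (σ : Equiv.Perm (Fin n)) : Prop :=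
  ∀ τ : Equiv.Perm (Fin n),
    (∀ x, maxS τ x ≤ maxS σ x) → (∀ x, maxS τ⁻¹ x ≤ maxS σ⁻¹ x) → bruhatLE τ σ

open Finset Equiv

def rankCount (π : Perm (Fin n)) (p q : Fin n) : ℕ := #{x | x ≤ p ∧ π x ≤ q}

theorem bruhatLE_iff_rankCount {τ σ : Perm (Fin n)} :
    bruhatLE τ σ ↔ ∀ p q, rankCount σ p q ≤ rankCount τ p q := Iff.rfl

theorem bruhatLE_trans {ρ τ σ : Perm (Fin n)} (h₁ : bruhatLE ρ τ) (h₂ : bruhatLE τ σ) :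
    bruhatLE ρ σ :=
  fun p q => (h₂ p q).trans (h₁ p q)

instance (τ σ : Perm (Fin n)) : Decidable (bruhatLE τ σ) := by
  unfold bruhatLE; infer_instance

theorem rankCount_inv (π : Perm (Fin n)) (p q : Fin n) : rankCount π⁻¹ q p = rankCount π p q := by
  refine card_nbij' (fun x => π⁻¹ x) π ?_ ?_ ?_ ?_ <;> intro x <;> simp [and_comm]

theorem bruhatLE_inv_inv {τ σ : Perm (Fin n)} : bruhatLE τ⁻¹ σ⁻¹ ↔ bruhatLE τ σ := by
  simp only [bruhatLE_iff_rankCount, rankCount_inv]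
  exact forall_comm

theorem rankCount_le_succ_left (π : Perm (Fin n)) (p q : Fin n) : rankCount π p q ≤ p + 1 :=
  (Fin.card_Iic p).symm ▸ card_le_card fun _ hx => mem_Iic.2 (mem_filter.1 hx).2.1

theorem rankCount_le_succ_right (π : Perm (Fin n)) (p q : Fin n) : rankCount π p q ≤ q + 1 :=
  rankCount_inv π p q ▸ rankCount_le_succ_left π⁻¹ q p

theorem rankCount_le_left_iff {π : Perm (Fin n)} {p q : Fin n} :
    rankCount π p q ≤ p ↔ ∃ x ≤ p, q < π x := by
  constructor
  · intro h
    by_contra! hall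
    have hsub : Iic p ⊆ ({x | x ≤ p ∧ π x ≤ q} : Finset _) := fun x hx => by
      simpa [mem_Iic.1 hx] using hall x (mem_Iic.1 hx)
    have : (p : ℕ) + 1 ≤ rankCount π p q := Fin.card_Iic p ▸ card_le_card hsub
    omega
  · rintro ⟨x₀, hx₀, hq⟩
    have hsub : ({x | x ≤ p ∧ π x ≤ q} : Finset _) ⊆ (Iic p).erase x₀ := fun x hx => by
      simp only [mem_filter, mem_univ, true_and] at hx
      exact mem_erase.2 ⟨by rintro rfl; exact not_lt.2 hx.2 hq, mem_Iic.2 hx.1⟩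
    exact (card_le_card hsub).trans_eq
      (by rw [card_erase_of_mem (mem_Iic.2 hx₀), Fin.card_Iic, Nat.add_sub_cancel])

theorem rankCount_le_right_iff {π : Perm (Fin n)} {p q : Fin n} :
    rankCount π p q ≤ q ↔ ∃ z, p < z ∧ π z ≤ q := by
  rw [← rankCount_inv, rankCount_le_left_iff]
  exact ⟨fun ⟨y, hy, hp⟩ => ⟨π⁻¹ y, hp, by simpa using hy⟩,
    fun ⟨z, hz, hq⟩ => ⟨π z, hq, by simpa using hz⟩⟩

theorem min_le_rankCount_swap {i j : Fin n} (hij : i < j) (p q : Fin n) :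
    min (p : ℕ) q ≤ rankCount (swap i j) p q :=
  calc min (p : ℕ) q = #(Iic (min p q)) - 1 := by rw [Fin.card_Iic, Fin.coe_min]; omega
    _ ≤ #((Iic (min p q)).erase i) := pred_card_le_card_erase
    _ ≤ rankCount (swap i j) p q := card_le_card fun x hx => by
      obtain ⟨hxi, hx⟩ := mem_erase.1 hx
      rw [mem_Iic, le_min_iff] at hx
      refine mem_filter.2 ⟨mem_univ x, hx.1, ?_⟩
      rw [swap_apply_def]
      split_ifs <;> omega

theorem min_succ_le_rankCount_swap {i j : Fin n} (hij : i < j) {p q : Fin n}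
    (hq : q < i ∨ j ≤ q) : min (p : ℕ) q + 1 ≤ rankCount (swap i j) p q :=
  calc min (p : ℕ) q + 1 = #(Iic (min p q)) := by rw [Fin.card_Iic, Fin.coe_min]
    _ ≤ rankCount (swap i j) p q := card_le_card fun x hx => by
      rw [mem_Iic, le_min_iff] at hx
      refine mem_filter.2 ⟨mem_univ x, hx.1, ?_⟩
      rw [swap_apply_def]
      split_ifs <;> omega

theorem exists_le_le_apply_of_swap_bruhatLE {i j : Fin n} (hij : i < j) {σ : Perm (Fin n)}
    (h : bruhatLE (swap i j) σ) : ∃ x ≤ i, j ≤ σ x := by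
  let j' : Fin n := ⟨j - 1, by omega⟩
  have hj' : (j' : ℕ) + 1 = j := by simp only [j']; omega
  have hswap : rankCount (swap i j) i j' ≤ i :=
    rankCount_le_left_iff.2 ⟨i, le_rfl, by rw [swap_apply_left]; omega⟩
  obtain ⟨x, hx, hjx⟩ := rankCount_le_left_iff.1 ((h i j').trans hswap)
  exact ⟨x, hx, by omega⟩

theorem swap_bruhatLE_iff {i j : Fin n} (hij : i < j) {σ : Perm (Fin n)} :
    bruhatLE (swap i j) σ ↔ (∃ x ≤ i, j ≤ σ x) ∧ ∃ z, j ≤ z ∧ σ z ≤ i := by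
  constructor
  · intro h
    refine ⟨exists_le_le_apply_of_swap_bruhatLE hij h, ?_⟩
    obtain ⟨y, hy, hjy⟩ := exists_le_le_apply_of_swap_bruhatLE hij (σ := σ⁻¹)
      (by rwa [← swap_inv, bruhatLE_inv_inv])
    exact ⟨σ⁻¹ y, hjy, by simpa using hy⟩
  · rintro ⟨⟨x₀, hx₀, hjx₀⟩, z₀, hjz₀, hz₀⟩
    refine bruhatLE_iff_rankCount.2 fun p q => ?_
    by_cases hbox : i ≤ p ∧ p < j ∧ i ≤ q ∧ q < j
    · have h₁ : rankCount σ p q ≤ p := rankCount_le_left_iff.2 ⟨x₀, by omega, by omega⟩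
      have h₂ : rankCount σ p q ≤ q := rankCount_le_right_iff.2 ⟨z₀, by omega, by omega⟩
      have := min_le_rankCount_swap hij p q
      omega
    · have h₁ := rankCount_le_succ_left σ p q
      have h₂ := rankCount_le_succ_right σ p q
      have : min (p : ℕ) q + 1 ≤ rankCount (swap i j) p q := by
        by_cases hq : q < i ∨ j ≤ q
        · exact min_succ_le_rankCount_swap hij hq
        · rw [← rankCount_inv, swap_inv, min_comm]
          exact min_succ_le_rankCount_swap hij (by omega)
      omega

def transpositionsBelow (σ : Perm (Fin n)) : Finset (Fin n × Fin n) :=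
  {ij | ij.1 < ij.2 ∧ bruhatLE (swap ij.1 ij.2) σ}

theorem mem_transpositionsBelow {σ : Perm (Fin n)} {i j : Fin n} :
    (i, j) ∈ transpositionsBelow σ ↔
      i < j ∧ (∃ x ≤ i, j ≤ σ x) ∧ ∃ z, j ≤ z ∧ σ z ≤ i := by
  simp only [transpositionsBelow, mem_filter, mem_univ, true_and]
  exact ⟨fun ⟨hij, h⟩ => ⟨hij, (swap_bruhatLE_iff hij).1 h⟩,
    fun ⟨hij, h⟩ => ⟨hij, (swap_bruhatLE_iff hij).2 h⟩⟩

theorem transpositionsBelow_mono {τ σ : Perm (Fin n)} (h : bruhatLE τ σ) :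
    transpositionsBelow τ ⊆ transpositionsBelow σ :=
  fun ij hij => by
    simp only [transpositionsBelow, mem_filter, mem_univ, true_and] at hij ⊢
    exact ⟨hij.1, bruhatLE_trans hij.2 h⟩

theorem transpositionsBelow_inv (σ : Perm (Fin n)) :
    transpositionsBelow σ⁻¹ = transpositionsBelow σ := by
  ext ij
  simp only [transpositionsBelow, mem_filter, mem_univ, true_and]
  rw [← bruhatLE_inv_inv, swap_inv, inv_inv]

theorem swap_eq_swap_iff {i j k l : Fin n} (hij : i < j) (hkl : k < l) :
    swap i j = swap k l ↔ i = k ∧ j = l := by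
  refine ⟨fun he => ?_, fun ⟨hik, hjl⟩ => hik ▸ hjl ▸ rfl⟩
  have hi := congr($he i)
  have hj := congr($he j)
  simp only [swap_apply_left, swap_apply_right, swap_apply_def] at hi hj
  split_ifs at hi hj <;> omega

theorem card_transpositionsBelow (σ : Perm (Fin n)) :
    Nat.card {τ : Perm (Fin n) // isTransposition τ ∧ bruhatLE τ σ} =
      #(transpositionsBelow σ) := by
  have hmem {ij : Fin n × Fin n} : ij ∈ transpositionsBelow σ ↔
      ij.1 < ij.2 ∧ bruhatLE (swap ij.1 ij.2) σ := by
    simp [transpositionsBelow]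
  rw [← Nat.card_eq_finsetCard]
  refine (Nat.card_eq_of_bijective (fun ij : transpositionsBelow σ =>
    (⟨swap ij.1.1 ij.1.2, ⟨_, _, (hmem.1 ij.2).1, rfl⟩, (hmem.1 ij.2).2⟩ :
      {τ // isTransposition τ ∧ bruhatLE τ σ})) ⟨?_, ?_⟩).symm
  · rintro ⟨⟨i, j⟩, h⟩ ⟨⟨k, l⟩, h'⟩ he
    obtain ⟨rfl, rfl⟩ :=
      (swap_eq_swap_iff (hmem.1 h).1 (hmem.1 h').1).1 (congrArg Subtype.val he)
    rfl
  · rintro ⟨_, ⟨i, j, hij, rfl⟩, hle⟩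
    exact ⟨⟨(i, j), hmem.2 ⟨hij, hle⟩⟩, rfl⟩

theorem smooth_iff {σ : Perm (Fin n)} : smooth σ ↔ invNum σ = #(transpositionsBelow σ) := by
  rw [smooth, card_transpositionsBelow]

theorem invNum_inv (σ : Perm (Fin n)) : invNum σ⁻¹ = invNum σ :=
  card_nbij' (fun ij => (σ⁻¹ ij.2, σ⁻¹ ij.1)) (fun ij => (σ ij.2, σ ij.1))
    (by intro; simp +contextual) (by intro; simp +contextual) (by intro; simp) (by intro; simp)

theorem smooth_inv {σ : Perm (Fin n)} : smooth σ⁻¹ ↔ smooth σ := by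
  rw [smooth_iff, smooth_iff, invNum_inv, transpositionsBelow_inv]

theorem swap_apply_lt_swap_apply {a b p q : Fin n} (hab : (a : ℕ) + 1 = b) (hpq : p < q)
    (hne : (p, q) ≠ (a, b)) : swap a b p < swap a b q := by
  simp only [swap_apply_def, ne_eq, Prod.mk.injEq] at *
  split_ifs <;> omega

theorem invNum_mul_swap_add_one {σ : Perm (Fin n)} {a b : Fin n} (hab : (a : ℕ) + 1 = b)
    (hd : σ b < σ a) : invNum (σ * swap a b) + 1 = invNum σ := by
  let s := swap a b
  have hmem : (a, b) ∈ ({ij | ij.1 < ij.2 ∧ σ ij.2 < σ ij.1} : Finset (Fin n × Fin n)) := by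
    simp only [mem_filter, mem_univ, true_and]; exact ⟨by omega, hd⟩
  rw [invNum, invNum, ← card_erase_add_one hmem]
  congr 1
  refine card_bij' (fun ij _ => Prod.map s s ij) (fun ij _ => Prod.map s s ij) ?_ ?_ ?_ ?_
  · rintro ⟨p, q⟩ h
    simp only [mem_erase, mem_filter, mem_univ, true_and] at h ⊢
    simp only [Perm.mul_apply, Prod.map, ne_eq, Prod.mk.injEq] at h ⊢
    obtain ⟨hpq, hσ⟩ := h
    have hne : (p, q) ≠ (a, b) := by
      rintro ⟨⟩
      rw [swap_apply_left, swap_apply_right] at hσ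
      exact hσ.not_gt hd
    refine ⟨fun ⟨hpa, hqb⟩ => ?_, swap_apply_lt_swap_apply hab hpq hne, hσ⟩
    rw [swap_apply_eq_iff, swap_apply_left] at hpa
    rw [swap_apply_eq_iff, swap_apply_right] at hqb
    omega
  · rintro ⟨p, q⟩ h
    simp only [mem_erase, mem_filter, mem_univ, true_and] at h ⊢
    simp only [Perm.mul_apply, Prod.map, ne_eq, Prod.mk.injEq, s, swap_apply_self] at h ⊢
    exact ⟨swap_apply_lt_swap_apply hab h.2.1 fun he => h.1 (Prod.ext_iff.1 he), h.2.2⟩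
  all_goals rintro ⟨p, q⟩ -; simp [s]

theorem mul_swap_bruhatLE {σ : Perm (Fin n)} {a b : Fin n} (hab : (a : ℕ) + 1 = b)
    (hd : σ b < σ a) : bruhatLE (σ * swap a b) σ := by
  refine bruhatLE_iff_rankCount.2 fun p q => ?_
  by_cases hpa : p = a
  · subst hpa
    refine card_le_card fun x hx => ?_
    simp only [mem_filter, mem_univ, true_and] at hx ⊢
    refine ⟨hx.1, ?_⟩
    rcases eq_or_ne x p with rfl | hxp
    · rw [Perm.mul_apply, swap_apply_left]; exact hd.le.trans hx.2
    · rw [Perm.mul_apply, swap_apply_of_ne_of_ne hxp (by omega)]; exact hx.2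
  · -- for `p ≠ a` the interval `[0, p]` is stable under the swap
    refine card_le_card_of_injOn (swap a b) (fun x hx => ?_) (swap a b).injective.injOn
    simp only [mem_coe, mem_filter, mem_univ, true_and] at hx ⊢
    refine ⟨?_, by rw [Perm.mul_apply, swap_apply_self]; exact hx.2⟩
    rw [swap_apply_def]
    split_ifs <;> omega

theorem apply_le_of_forall_lt_fixed {σ : Perm (Fin n)} {v x : Fin n}
    (hfix : ∀ z, v < z → σ z = z) (hx : x ≤ v) : σ x ≤ v := by
  by_contra! h
  rw [σ.injective (hfix _ h)] at h
  exact h.not_ge hx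

theorem exists_descent_ssubset_of_apply_le {σ : Perm (Fin n)} {v : Fin n}
    (hfix : ∀ z, v < z → σ z = z) (hv : σ v ≠ v) (hle : σ v ≤ σ⁻¹ v) :
    ∃ a b : Fin n, (a : ℕ) + 1 = b ∧ σ b < σ a ∧
      transpositionsBelow (σ * swap a b) ⊂ transpositionsBelow σ := by
  set a := σ⁻¹ v
  have hσa : σ a = v := σ.apply_symm_apply v
  have hfix' : ∀ z, v < z → σ⁻¹ z = z := fun z hz => by rw [Perm.inv_eq_iff_eq, hfix z hz]
  have hav : a < v :=
    (apply_le_of_forall_lt_fixed hfix' le_rfl).lt_of_ne fun h => hv (h ▸ hσa)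
  obtain ⟨b, hab⟩ : ∃ b : Fin n, (a : ℕ) + 1 = b := ⟨⟨a + 1, by omega⟩, rfl⟩
  have hd : σ b < σ a :=
    hσa ▸ (apply_le_of_forall_lt_fixed hfix (by omega)).lt_of_ne
      (hσa ▸ σ.injective.ne (by omega))
  refine ⟨a, b, hab, hd, (ssubset_iff_of_subset
    (transpositionsBelow_mono (mul_swap_bruhatLE hab hd))).2 ⟨(a, v), ?_, fun h => ?_⟩⟩
  · exact mem_transpositionsBelow.2 ⟨hav, ⟨a, le_rfl, hσa.ge⟩, v, le_rfl, hle⟩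
  · obtain ⟨-, ⟨x, hxa, hvx⟩, -⟩ := mem_transpositionsBelow.1 h
    rw [Perm.mul_apply] at hvx
    have hsx : swap a b x ≤ v := by rw [swap_apply_def]; split_ifs <;> omega
    have hsxa : swap a b x ≠ a := by rw [swap_apply_def]; split_ifs <;> omega
    exact hsxa (σ.injective ((le_antisymm (apply_le_of_forall_lt_fixed hfix hsx) hvx).trans
      hσa.symm))

theorem exists_last_moved {σ : Perm (Fin n)} (hne : σ ≠ 1) :
    ∃ v, σ v ≠ v ∧ ∀ z, v < z → σ z = z := by
  have hsupp : σ.support.Nonempty :=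
    nonempty_iff_ne_empty.2 (Perm.support_eq_empty_iff.not.2 hne)
  refine ⟨σ.support.max' hsupp, Perm.mem_support.1 (max'_mem _ _), fun z hz => ?_⟩
  by_contra h
  exact (le_max' _ z (Perm.mem_support.2 h)).not_gt hz

theorem exists_descent_ssubset {σ : Perm (Fin n)} (hne : σ ≠ 1) :
    ∃ ρ, (ρ = σ ∨ ρ = σ⁻¹) ∧ ∃ a b : Fin n, (a : ℕ) + 1 = b ∧ ρ b < ρ a ∧
      transpositionsBelow (ρ * swap a b) ⊂ transpositionsBelow ρ := by
  obtain ⟨v, hv, hfix⟩ := exists_last_moved hne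
  rcases le_total (σ v) (σ⁻¹ v) with hle | hle
  · exact ⟨σ, .inl rfl, exists_descent_ssubset_of_apply_le hfix hv hle⟩
  · refine ⟨σ⁻¹, .inr rfl, exists_descent_ssubset_of_apply_le
      (fun z hz => by rw [Perm.inv_eq_iff_eq, hfix z hz]) ?_ (by rwa [inv_inv])⟩
    rwa [ne_eq, Perm.inv_eq_iff_eq, eq_comm]

theorem invNum_one : invNum (1 : Perm (Fin n)) = 0 :=
  card_eq_zero.2 <| filter_eq_empty_iff.2 fun _ _ h => lt_asymm h.1 h.2

theorem invNum_le_card_transpositionsBelow (σ : Perm (Fin n)) :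
    invNum σ ≤ #(transpositionsBelow σ) := by
  induction hk : invNum σ using Nat.strong_induction_on generalizing σ with
  | _ k ih =>
    by_cases hne : σ = 1
    · simp [← hk, hne, invNum_one]
    obtain ⟨ρ, hρ, a, b, hab, hd, hss⟩ := exists_descent_ssubset hne
    obtain ⟨hlenρ, hcardρ⟩ : invNum ρ = invNum σ ∧
        #(transpositionsBelow ρ) = #(transpositionsBelow σ) := by
      rcases hρ with rfl | rfl
      · exact ⟨rfl, rfl⟩
      · rw [invNum_inv, transpositionsBelow_inv]; exact ⟨rfl, rfl⟩
    have hlen := invNum_mul_swap_add_one hab hd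
    have hcard := card_lt_card hss
    have := ih _ (by omega) (ρ * swap a b) rfl
    omega

theorem smooth_mul_swap {σ : Perm (Fin n)} (hs : smooth σ) {a b : Fin n}
    (hab : (a : ℕ) + 1 = b) (hd : σ b < σ a)
    (hss : transpositionsBelow (σ * swap a b) ⊂ transpositionsBelow σ) :
    smooth (σ * swap a b) := by
  rw [smooth_iff] at hs ⊢
  have := invNum_le_card_transpositionsBelow (σ * swap a b)
  have := invNum_mul_swap_add_one hab hd
  have := card_lt_card hss
  omega

theorem smooth_descent (n : ℕ) (σ : Equiv.Perm (Fin n)) (hs : smooth σ) (hne : σ ≠ 1) :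
    ∃ σ' : Equiv.Perm (Fin n), smooth σ' ∧ invNum σ' + 1 = invNum σ ∧
      ((∃ a b : Fin n, (a : ℕ) + 1 = (b : ℕ) ∧ σ⁻¹ * σ' = Equiv.swap a b) ∨
       (∃ a b : Fin n, (a : ℕ) + 1 = (b : ℕ) ∧ σ' * σ⁻¹ = Equiv.swap a b)) := by
  obtain ⟨ρ, hρ, a, b, hab, hd, hss⟩ := exists_descent_ssubset hne
  rcases hρ with rfl | rfl
  · exact ⟨_, smooth_mul_swap hs hab hd hss, invNum_mul_swap_add_one hab hd,
      .inl ⟨a, b, hab, inv_mul_cancel_left _ _⟩⟩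
  · refine ⟨(σ⁻¹ * swap a b)⁻¹, smooth_inv.2 (smooth_mul_swap (smooth_inv.2 hs) hab hd hss),
      ?_, .inr ⟨a, b, hab, ?_⟩⟩
    · rw [invNum_inv, ← invNum_inv σ]
      exact invNum_mul_swap_add_one hab hd
    · rw [mul_inv_rev, swap_inv, inv_inv, mul_inv_cancel_right]

end SmoothPerm
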